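/- arXiv:2012.02703 — 3 statements merged into one kernel-verified Lean document; each statement's English description precedes it below -/
import Mathlib

section
/- Under C-clique influence, every agent's belief converges to the average of the initial beliefs: for every agent i, lim_{t→∞} B_i^t = (1/n) · Σ_{k ∈ A} B_k^0. -/
/-!
The update moves every belief towards the current mean, and the total belief is conserved, so the
mean is invariant. Hence the deviation of each belief from the initial mean is multiplied by
`1 - C` at every step and decays geometrically to zero.
-/

open Filter Topology Finset
open scoped BigOperators

section CliqueStep

variable {ι : Type*} [Fintype ι]

def cliqueStep (c : ℝ) (x : ι → ℝ) : ι → ℝ := fun i => x i + c * ∑ k, (x k - x i)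

theorem sum_cliqueStep (c : ℝ) (x : ι → ℝ) : ∑ i, cliqueStep c x i = ∑ i, x i := by
  have hcancel : ∑ i, ∑ k, (x k - x i) = 0 := by
    simp only [sum_sub_distrib]
    rw [sum_comm, sub_self]
  simp only [cliqueStep, sum_add_distrib, ← mul_sum, hcancel, mul_zero, add_zero]

theorem expect_cliqueStep (c : ℝ) (x : ι → ℝ) : 𝔼 i, cliqueStep c x i = 𝔼 i, x i := by
  simp only [Fintype.expect_eq_sum_div_card, sum_cliqueStep]

theorem cliqueStep_sub_expect [Nonempty ι] (c : ℝ) (x : ι → ℝ) (i : ι) :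
    cliqueStep c x i - 𝔼 k, x k = (1 - c * Fintype.card ι) * (x i - 𝔼 k, x k) := by
  have hsum : ∑ k, x k = Fintype.card ι * 𝔼 k, x k := by
    rw [Fintype.expect_eq_sum_div_card,
      mul_div_cancel₀ _ (Nat.cast_ne_zero.mpr Fintype.card_ne_zero)]
  simp only [cliqueStep, sum_sub_distrib, sum_const, card_univ, nsmul_eq_mul, hsum]
  ring

variable [Nonempty ι] {c : ℝ} {B : ℕ → ι → ℝ}

theorem sub_expect_eq_pow_mul_of_cliqueStep (hB : ∀ t, B (t + 1) = cliqueStep c (B t))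
    (t : ℕ) (i : ι) :
    B t i - 𝔼 k, B 0 k = (1 - c * Fintype.card ι) ^ t * (B 0 i - 𝔼 k, B 0 k) := by
  have hexpect : ∀ t, 𝔼 k, B t k = 𝔼 k, B 0 k := by
    intro t
    induction t with
    | zero => rfl
    | succ t ih => rw [hB, expect_cliqueStep, ih]
  induction t with
  | zero => simp
  | succ t ih => rw [hB, ← hexpect t, cliqueStep_sub_expect, hexpect t, ih, pow_succ']; ring

theorem tendsto_expect_of_cliqueStep (hB : ∀ t, B (t + 1) = cliqueStep c (B t))
    (hc : |1 - c * Fintype.card ι| < 1) (i : ι) :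
    Tendsto (fun t => B t i) atTop (𝓝 (𝔼 k, B 0 k)) := by
  have hdev : Tendsto
      (fun t => (1 - c * Fintype.card ι) ^ t * (B 0 i - 𝔼 k, B 0 k) + 𝔼 k, B 0 k)
      atTop (𝓝 (0 * (B 0 i - 𝔼 k, B 0 k) + 𝔼 k, B 0 k)) :=
    ((tendsto_pow_atTop_nhds_zero_of_abs_lt_one hc).mul_const _).add_const _
  rw [zero_mul, zero_add] at hdev
  refine hdev.congr fun t => ?_
  rw [← sub_expect_eq_pow_mul_of_cliqueStep hB, sub_add_cancel]

end CliqueStep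

theorem clique_consensus_value_general (n : ℕ) (C : ℝ) (hC : C ∈ Set.Ioc (0:ℝ) 1)
    (B : ℕ → Fin n → ℝ)
    (hupd : ∀ t i, B (t+1) i = B t i + (C / n) * ∑ k, (B t k - B t i))
    (i : Fin n) :
    Filter.Tendsto (fun t => B t i) Filter.atTop
      (nhds ((1 / (n : ℝ)) * ∑ k, B 0 k)) := by
  have : Nonempty (Fin n) := ⟨i⟩
  have hn : (n : ℝ) ≠ 0 := Nat.cast_ne_zero.mpr i.pos.ne'
  have hrate : |1 - C / n * Fintype.card (Fin n)| < 1 := by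
    rw [Fintype.card_fin, div_mul_cancel₀ C hn, abs_lt]
    constructor <;> linarith [hC.1, hC.2]
  have hmean : 1 / (n : ℝ) * ∑ k, B 0 k = 𝔼 k, B 0 k := by
    rw [Fintype.expect_eq_sum_div_card, Fintype.card_fin, one_div_mul_eq_div]
  rw [hmean]
  exact tendsto_expect_of_cliqueStep (fun t => funext (hupd t)) hrate i

theorem clique_consensus_value (n : ℕ) (hn : 0 < n) (C : ℝ) (hC : C ∈ Set.Ioc (0:ℝ) 1)
    (B : ℕ → Fin n → ℝ) (hB : ∀ t i, B t i ∈ Set.Icc (0:ℝ) 1)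
    (hupd : ∀ t i, B (t+1) i = B t i + (C / n) * ∑ k, (B t k - B t i))
    (i : Fin n) :
    Filter.Tendsto (fun t => B t i) Filter.atTop
      (nhds ((1 / (n : ℝ)) * ∑ k, B 0 k)) :=
  clique_consensus_value_general n C hC B hupd i
end

section
/- If the influence graph is strongly connected (for every pair of distinct agents i ≠ j there is an influence path from i to j), then lim_{t→∞} max^t = lim_{t→∞} min^t; i.e., the extreme beliefs converge to a common value. -/
/-!
Each new belief is a weighted average of the old ones in which agent `i` keeps weight at least
`1 / n` on itself and gives weight `I j i / n` to every agent `j`; hence the maximum never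
increases and the minimum never decreases. Fix `δ > 0` below all these positive weights. Let the
maximum at time `t` be held by `j₀`, and let `R r` be the set of agents lying at least
`δ ^ r * (max^t - min^t)` above `min^t` at time `t + r`. Then `j₀ ∈ R 0`, and `R (r + 1)`
contains `R r` together with everything `R r` influences; by strong connectivity `R r` gains an
agent at every step until it is everything, so after `n` steps the gap has shrunk by the factor
`1 - δ ^ n`. A monotone and an antitone sequence whose gap contracts in this way have a common
limit.
-/

/-- An influence path: a finite sequence of distinct agents, each having
strictly positive direct influence over the next. -/
def IsInfluencePath {n : ℕ} (I : Fin n → Fin n → ℝ) (l : List (Fin n)) : Prop :=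
  l.Nodup ∧ l.Chain' (fun a b => 0 < I a b)

/-- Strong connectivity: every agent has an influence path to every other agent. -/
def StronglyConnected {n : ℕ} (I : Fin n → Fin n → ℝ) : Prop :=
  ∀ i j : Fin n, i ≠ j → ∃ l : List (Fin n),
    IsInfluencePath I l ∧ l.head? = some i ∧ l.getLast? = some j

open Finset Filter Topology

lemma exists_tendsto_of_gap_contracts {M m : ℕ → ℝ} (hM : Antitone M) (hm : Monotone m)
    (hmM : ∀ t, m t ≤ M t) {p : ℕ} {q : ℝ} (hq : q < 1)
    (hcontr : ∀ t, M (t + p) - m (t + p) ≤ q * (M t - m t)) :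
    ∃ c, Tendsto M atTop (𝓝 c) ∧ Tendsto m atTop (𝓝 c) := by
  have hMc : Tendsto M atTop (𝓝 (⨅ t, M t)) :=
    tendsto_atTop_ciInf hM ⟨m 0, fun _ ⟨t, ht⟩ => ht ▸ (hm t.zero_le).trans (hmM t)⟩
  have hmc : Tendsto m atTop (𝓝 (⨆ t, m t)) :=
    tendsto_atTop_ciSup hm ⟨M 0, fun _ ⟨t, ht⟩ => ht ▸ (hmM t).trans (hM t.zero_le)⟩
  have hgap := hMc.sub hmc
  have hshift := hgap.comp (tendsto_add_atTop_nat p)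
  have hle : (⨆ t, m t) ≤ ⨅ t, M t := le_of_tendsto_of_tendsto' hmc hMc hmM
  have hcontr_lim := le_of_tendsto_of_tendsto' hshift (hgap.const_mul q) hcontr
  have heq : (⨅ t, M t) = ⨆ t, m t := by nlinarith
  exact ⟨_, hMc, heq ▸ hmc⟩

lemma Finset.eq_univ_of_ssubset_succ {α : Type*} [Fintype α] {R : ℕ → Finset α}
    (h0 : (R 0).Nonempty) (hmono : ∀ r, R r ⊆ R (r + 1))
    (hgrow : ∀ r, R r ≠ univ → R r ⊂ R (r + 1)) : R (Fintype.card α) = univ := by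
  have key : ∀ r, R r = univ ∨ r < #(R r) := by
    intro r
    induction r with
    | zero => exact Or.inr h0.card_pos
    | succ r ih =>
      by_cases hr : R r = univ
      · exact Or.inl (univ_subset_iff.1 (hr ▸ hmono r))
      · exact Or.inr (Nat.lt_of_le_of_lt (ih.resolve_left hr) (card_lt_card (hgrow r hr)))
  exact (key _).resolve_right (card_le_univ _).not_gt

section Network

variable {n : ℕ} {I : Fin n → Fin n → ℝ}

lemma StronglyConnected.mem_of_closed (hsc : StronglyConnected I) {S : Set (Fin n)}
    (hS : ∀ j k, 0 < I j k → j ∈ S → k ∈ S) {j : Fin n} (hj : j ∈ S) (k : Fin n) : k ∈ S := by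
  obtain rfl | hjk := eq_or_ne j k
  · exact hj
  obtain ⟨l, ⟨-, hl⟩, hhead, hlast⟩ := hsc j k hjk
  refine List.IsChain.induction (· ∈ S) l hl (fun x y hxy => hS x y hxy) (fun hne => ?_) k
    (List.mem_of_getLast? hlast)
  rwa [(List.head_eq_iff_head?_eq_some hne).2 hhead]

lemma exists_mixing_rate (hn : 0 < n) (I : Fin n → Fin n → ℝ) :
    ∃ δ : ℝ, 0 < δ ∧ δ ≤ 1 / n ∧ ∀ j i, 0 < I j i → δ ≤ I j i / n := by
  have hpos : ∀ᶠ ε in 𝓝[>] (0 : ℝ), ∀ j i, 0 < I j i → ε ≤ I j i :=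
    eventually_all.2 fun j => eventually_all.2 fun i =>
      if h : 0 < I j i then
        (eventually_nhdsWithin_of_eventually_nhds (eventually_le_nhds h)).mono fun _ hε _ => hε
      else Eventually.of_forall fun _ h' => absurd h' h
  have hle_one : ∀ᶠ ε in 𝓝[>] (0 : ℝ), ε ≤ 1 :=
    eventually_nhdsWithin_of_eventually_nhds (eventually_le_nhds one_pos)
  obtain ⟨ε, ⟨hε, hε1⟩, hε0⟩ := ((hpos.and hle_one).and self_mem_nhdsWithin).exists
  have hn' : (0 : ℝ) < n := by exact_mod_cast hn
  exact ⟨_, div_pos hε0 hn', div_le_div_of_nonneg_right hε1 hn'.le,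
    fun j i h => div_le_div_of_nonneg_right (hε j i h) hn'.le⟩

noncomputable def beliefStep (I : Fin n → Fin n → ℝ) (b : Fin n → ℝ) (i : Fin n) : ℝ :=
  b i + (1 / n) * ∑ j, I j i * (b j - b i)

variable {b : Fin n → ℝ} {a : ℝ}

lemma beliefStep_le (hI : ∀ i j, I i j ∈ Set.Icc (0 : ℝ) 1) {M : ℝ} (hM : ∀ k, b k ≤ M)
    (i : Fin n) : beliefStep I b i ≤ M := by
  have hn : (0 : ℝ) < n := by exact_mod_cast i.pos
  have hsum : ∑ k, I k i * (b k - b i) ≤ n * (M - b i) := calc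
    ∑ k, I k i * (b k - b i) ≤ ∑ _k : Fin n, (M - b i) :=
      sum_le_sum fun k _ => by
        nlinarith [mul_nonneg (sub_nonneg.2 (hI k i).2) (sub_nonneg.2 (hM i)),
          mul_nonneg (hI k i).1 (sub_nonneg.2 (hM k))]
    _ = n * (M - b i) := by simp; ring
  calc beliefStep I b i ≤ b i + 1 / n * (n * (M - b i)) := by unfold beliefStep; gcongr
    _ = M := by field_simp; ring

lemma add_div_mul_sub_le_beliefStep (hI : ∀ i j, I i j ∈ Set.Icc (0 : ℝ) 1)
    (ha : ∀ k, a ≤ b k) (j i : Fin n) : a + I j i / n * (b j - a) ≤ beliefStep I b i := by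
  have hn : (0 : ℝ) < n := by exact_mod_cast i.pos
  have hsplit : ∑ k, I k i * (b k - b i) = ∑ k, I k i * (b k - a) - (∑ k, I k i) * (b i - a) := by
    rw [sum_mul, ← sum_sub_distrib]
    exact sum_congr rfl fun k _ => by ring
  have hj : I j i * (b j - a) ≤ ∑ k, I k i * (b k - a) :=
    single_le_sum (fun k _ => mul_nonneg (hI k i).1 (sub_nonneg.2 (ha k))) (mem_univ j)
  have htotal : (∑ k, I k i) * (b i - a) ≤ n * (b i - a) := by
    refine mul_le_mul_of_nonneg_right ?_ (sub_nonneg.2 (ha i))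
    simpa using sum_le_sum fun k (_ : k ∈ univ) => (hI k i).2
  calc a + I j i / n * (b j - a) = b i + 1 / n * (I j i * (b j - a) - n * (b i - a)) := by
        field_simp; ring
    _ ≤ beliefStep I b i := by
      unfold beliefStep
      rw [hsplit]
      gcongr

lemma add_div_sub_le_beliefStep (hI : ∀ i j, I i j ∈ Set.Icc (0 : ℝ) 1)
    (ha : ∀ k, a ≤ b k) (i : Fin n) : a + 1 / n * (b i - a) ≤ beliefStep I b i := by
  have hn : (0 : ℝ) < n := by exact_mod_cast i.pos
  -- every other agent pulls `b i` down by at most `b i - a`, and `i` itself not at all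
  have hterm : ∀ k, (a - b i) - (if i = k then a - b i else 0) ≤ I k i * (b k - b i) := by
    intro k
    obtain rfl | hik := eq_or_ne i k
    · simp
    · simp only [hik, if_false, sub_zero]
      nlinarith [mul_nonneg (hI k i).1 (sub_nonneg.2 (ha k)),
        mul_nonneg (sub_nonneg.2 (hI k i).2) (sub_nonneg.2 (ha i))]
  have hsum : n * (a - b i) - (a - b i) ≤ ∑ k, I k i * (b k - b i) := calc
    n * (a - b i) - (a - b i) = ∑ k, ((a - b i) - if i = k then a - b i else 0) := by
      simp [sum_sub_distrib, mul_sub]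
    _ ≤ _ := sum_le_sum fun k _ => hterm k
  calc a + 1 / n * (b i - a) = b i + 1 / n * (n * (a - b i) - (a - b i)) := by
        field_simp; ring
    _ ≤ beliefStep I b i := by unfold beliefStep; gcongr

lemma le_beliefStep (hI : ∀ i j, I i j ∈ Set.Icc (0 : ℝ) 1) (ha : ∀ k, a ≤ b k) (i : Fin n) :
    a ≤ beliefStep I b i :=
  le_trans (le_add_of_nonneg_right (by have := ha i; positivity))
    (add_div_sub_le_beliefStep hI ha i)

lemma add_mul_sub_le_beliefStep (hI : ∀ i j, I i j ∈ Set.Icc (0 : ℝ) 1) (ha : ∀ k, a ≤ b k)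
    {δ : ℝ} (hδn : δ ≤ 1 / n) (hδI : ∀ j i, 0 < I j i → δ ≤ I j i / n) {j i : Fin n}
    (hji : j = i ∨ 0 < I j i) : a + δ * (b j - a) ≤ beliefStep I b i := by
  have hbj : 0 ≤ b j - a := sub_nonneg.2 (ha j)
  rcases hji with rfl | hji
  · calc a + δ * (b j - a) ≤ a + 1 / n * (b j - a) := by gcongr
      _ ≤ beliefStep I b j := add_div_sub_le_beliefStep hI ha j
  · calc a + δ * (b j - a) ≤ a + I j i / n * (b j - a) := by gcongr; exact hδI j i hji
      _ ≤ beliefStep I b i := add_div_mul_sub_le_beliefStep hI ha j i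

end Network

section Trajectory

variable {n : ℕ} {I : Fin n → Fin n → ℝ} {B : ℕ → Fin n → ℝ}

lemma le_of_le_initial (hI : ∀ i j, I i j ∈ Set.Icc (0 : ℝ) 1)
    (hB : ∀ t i, B (t + 1) i = beliefStep I (B t) i) {a : ℝ} (ha : ∀ k, a ≤ B 0 k) :
    ∀ t k, a ≤ B t k := by
  intro t
  induction t with
  | zero => exact ha
  | succ t ih => exact fun k => hB t k ▸ le_beliefStep hI ih k

lemma add_pow_mul_sub_le_of_stronglyConnected (hI : ∀ i j, I i j ∈ Set.Icc (0 : ℝ) 1)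
    (hsc : StronglyConnected I) (hB : ∀ t i, B (t + 1) i = beliefStep I (B t) i)
    {a : ℝ} (ha : ∀ k, a ≤ B 0 k)
    {δ : ℝ} (hδ0 : 0 ≤ δ) (hδn : δ ≤ 1 / n) (hδI : ∀ j i, 0 < I j i → δ ≤ I j i / n)
    (j₀ i : Fin n) : a + δ ^ n * (B 0 j₀ - a) ≤ B n i := by
  set R : ℕ → Finset (Fin n) := fun r => {i | a + δ ^ r * (B 0 j₀ - a) ≤ B r i}
  have hR : ∀ r j i, j ∈ R r → (j = i ∨ 0 < I j i) → i ∈ R (r + 1) := by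
    intro r j i hj hji
    simp only [R, mem_filter, mem_univ, true_and] at hj ⊢
    calc a + δ ^ (r + 1) * (B 0 j₀ - a) = a + δ * (δ ^ r * (B 0 j₀ - a)) := by ring
      _ ≤ a + δ * (B r j - a) := by gcongr; linarith
      _ ≤ B (r + 1) i :=
        hB r i ▸ add_mul_sub_le_beliefStep hI (le_of_le_initial hI hB ha r) hδn hδI hji
  have hmono : ∀ r, R r ⊆ R (r + 1) := fun r i hi => hR r i i hi (Or.inl rfl)
  have hgrow : ∀ r, R r ≠ univ → R r ⊂ R (r + 1) := by
    refine fun r hr => ssubset_of_subset_of_ne (hmono r) fun heq => hr ?_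
    have hj₀ : j₀ ∈ R r := monotone_nat_of_le_succ hmono r.zero_le (by simp [R])
    exact eq_univ_of_forall <| hsc.mem_of_closed (S := ↑(R r))
      (fun j k hjk hj => heq ▸ hR r j k hj (Or.inr hjk)) hj₀
  have hall := Finset.eq_univ_of_ssubset_succ ⟨j₀, by simp [R]⟩ hmono hgrow
  have hi : i ∈ R (Fintype.card (Fin n)) := hall ▸ mem_univ i
  simpa [R] using hi

lemma antitone_sup' (hI : ∀ i j, I i j ∈ Set.Icc (0 : ℝ) 1)
    (hB : ∀ t i, B (t + 1) i = beliefStep I (B t) i) (h : (univ : Finset (Fin n)).Nonempty) :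
    Antitone fun t => univ.sup' h (B t) :=
  antitone_nat_of_succ_le fun t => sup'_le _ _ fun i _ =>
    hB t i ▸ beliefStep_le hI (fun k => le_sup' _ (mem_univ k)) i

lemma monotone_inf' (hI : ∀ i j, I i j ∈ Set.Icc (0 : ℝ) 1)
    (hB : ∀ t i, B (t + 1) i = beliefStep I (B t) i) (h : (univ : Finset (Fin n)).Nonempty) :
    Monotone fun t => univ.inf' h (B t) :=
  monotone_nat_of_le_succ fun t => le_inf' _ _ fun i _ =>
    hB t i ▸ le_beliefStep hI (fun k => inf'_le _ (mem_univ k)) i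

lemma sup'_sub_inf'_add_le (hI : ∀ i j, I i j ∈ Set.Icc (0 : ℝ) 1) (hsc : StronglyConnected I)
    (hB : ∀ t i, B (t + 1) i = beliefStep I (B t) i) {δ : ℝ} (hδ0 : 0 ≤ δ) (hδn : δ ≤ 1 / n)
    (hδI : ∀ j i, 0 < I j i → δ ≤ I j i / n) (h : (univ : Finset (Fin n)).Nonempty) (t : ℕ) :
    univ.sup' h (B (t + n)) - univ.inf' h (B (t + n)) ≤
      (1 - δ ^ n) * (univ.sup' h (B t) - univ.inf' h (B t)) := by
  obtain ⟨j₀, -, hj₀⟩ := exists_mem_eq_sup' h (B t)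
  have hspread := add_pow_mul_sub_le_of_stronglyConnected (B := fun s => B (t + s)) hI hsc
    (fun s i => hB (t + s) i) (a := univ.inf' h (B t)) (fun k => inf'_le _ (mem_univ k))
    hδ0 hδn hδI j₀
  have hinf : univ.inf' h (B t) + δ ^ n * (B t j₀ - univ.inf' h (B t)) ≤ univ.inf' h (B (t + n)) :=
    le_inf' _ _ fun i _ => hspread i
  have hsup := antitone_sup' hI hB h (t.le_add_right n)
  rw [hj₀]
  simp only at hsup
  linarith

end Trajectory

theorem extreme_consensus_general (n : ℕ) (hn : 0 < n)
    (I : Fin n → Fin n → ℝ) (hI : ∀ i j, I i j ∈ Set.Icc (0:ℝ) 1)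
    (hsc : StronglyConnected I)
    (B : ℕ → Fin n → ℝ)
    (hupd : ∀ t i, B (t+1) i = B t i + (1 / n) * ∑ j, I j i * (B t j - B t i)) :
    ∃ c : ℝ,
      Filter.Tendsto (fun t => Finset.univ.sup' ⟨⟨0, hn⟩, Finset.mem_univ _⟩ (B t))
        Filter.atTop (nhds c) ∧
      Filter.Tendsto (fun t => Finset.univ.inf' ⟨⟨0, hn⟩, Finset.mem_univ _⟩ (B t))
        Filter.atTop (nhds c) := by
  obtain ⟨δ, hδ0, hδn, hδI⟩ := exists_mixing_rate hn I
  have hne : (univ : Finset (Fin n)).Nonempty := ⟨⟨0, hn⟩, mem_univ _⟩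
  have hgap : 1 - δ ^ n < 1 := sub_lt_self 1 (pow_pos hδ0 n)
  exact exists_tendsto_of_gap_contracts (antitone_sup' hI hupd hne) (monotone_inf' hI hupd hne)
    (fun t => (inf'_le _ (mem_univ _)).trans (le_sup' _ (mem_univ ⟨0, hn⟩)))
    hgap (sup'_sub_inf'_add_le hI hsc hupd hδ0.le hδn hδI hne)

theorem extreme_consensus (n : ℕ) (hn : 0 < n)
    (I : Fin n → Fin n → ℝ) (hI : ∀ i j, I i j ∈ Set.Icc (0:ℝ) 1)
    (hsc : StronglyConnected I)
    (B : ℕ → Fin n → ℝ) (hB : ∀ t i, B t i ∈ Set.Icc (0:ℝ) 1)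
    (hupd : ∀ t i, B (t+1) i = B t i + (1 / n) * ∑ j, I j i * (B t j - B t i)) :
    ∃ c : ℝ,
      Filter.Tendsto (fun t => Finset.univ.sup' ⟨⟨0, hn⟩, Finset.mem_univ _⟩ (B t))
        Filter.atTop (nhds c) ∧
      Filter.Tendsto (fun t => Finset.univ.inf' ⟨⟨0, hn⟩, Finset.mem_univ _⟩ (B t))
        Filter.atTop (nhds c) :=
  extreme_consensus_general n hn I hI hsc B hupd
end

section
/- If the influence graph is balanced and weakly connected, then every agent's belief converges to the average of the initial beliefs: lim_{t→∞} B_i^t = (1/n) · Σ_j B_j^0 for every agent i. -/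
/-!
Balance forces strong connectivity: the set of agents reachable from `a` along positive
influences sends no weight out, hence by balance receives none, so it contains every agent
that influences `a`.

The update replaces `x i` by the average over `j` of the points `x i + I j i * (x j - x i)` of
the segments `[x i, x j]`. Hence the beliefs stay within their current range, their sum is
conserved (balance again), and along a directed path of length `K` the excess over a lower bound
is passed on with a factor at least `(ε / n) ^ K`, where `ε` is the least positive influence
(the term `j = i` gives every agent a self-weight `1 / n`). Pushing the excess of the currently
largest belief to all agents shows that `K` steps contract the spread `max - min` by the factor
`1 - (ε / n) ^ K`, so the spread tends to `0` and each belief is squeezed onto the conserved mean.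
-/

/-- Weak connectivity: the undirected graph with an edge between `i` and `j`
whenever `I i j > 0` or `I j i > 0` is connected. -/
def WeaklyConnected {n : ℕ} (I : Fin n → Fin n → ℝ) : Prop :=
  ∀ i j : Fin n, Relation.ReflTransGen (fun a b => 0 < I a b ∨ 0 < I b a) i j

open Finset Filter Topology Relation

section Balanced

variable {α : Type*} [Fintype α] {I : α → α → ℝ}

theorem sum_sum_compl_eq_of_balanced [DecidableEq α] (hbal : ∀ i, ∑ j, I i j = ∑ j, I j i)
    (S : Finset α) : ∑ x ∈ S, ∑ y ∈ Sᶜ, I x y = ∑ x ∈ S, ∑ y ∈ Sᶜ, I y x := by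
  have h : ∑ x ∈ S, (∑ y ∈ S, I x y + ∑ y ∈ Sᶜ, I x y) =
      ∑ x ∈ S, (∑ y ∈ S, I y x + ∑ y ∈ Sᶜ, I y x) :=
    sum_congr rfl fun x _ => by rw [sum_add_sum_compl, sum_add_sum_compl, hbal]
  rw [sum_add_distrib, sum_add_distrib, sum_comm (s := S) (t := S) (f := fun x y => I y x)] at h
  linarith

theorem reflTransGen_of_balanced (h0 : ∀ i j, 0 ≤ I i j) (hbal : ∀ i, ∑ j, I i j = ∑ j, I j i)
    {a b : α} (hba : 0 < I b a) : ReflTransGen (fun x y => 0 < I x y) a b := by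
  classical
  by_contra hab
  set S := univ.filter (ReflTransGen (fun x y => 0 < I x y) a)
  have hbS : b ∈ Sᶜ := by simpa [S] using hab
  have hout : ∑ x ∈ S, ∑ y ∈ Sᶜ, I x y = 0 := by
    refine sum_eq_zero fun x hx => sum_eq_zero fun y hy => (h0 x y).antisymm' ?_
    by_contra! hxy
    simp only [S, mem_compl, mem_filter, mem_univ, true_and] at hx hy
    exact hy (hx.tail hxy)
  have hin : I b a ≤ ∑ x ∈ S, ∑ y ∈ Sᶜ, I y x :=
    calc I b a ≤ ∑ y ∈ Sᶜ, I y a := single_le_sum (fun y _ => h0 y a) hbS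
      _ ≤ ∑ x ∈ S, ∑ y ∈ Sᶜ, I y x :=
        single_le_sum (f := fun x => ∑ y ∈ Sᶜ, I y x)
          (fun x _ => sum_nonneg fun y _ => h0 y x) (mem_filter.2 ⟨mem_univ a, .refl⟩)
  linarith [sum_sum_compl_eq_of_balanced hbal S]

end Balanced

theorem reflTransGen_of_weaklyConnected {n : ℕ} {I : Fin n → Fin n → ℝ}
    (h0 : ∀ i j, 0 ≤ I i j) (hbal : ∀ i, ∑ j, I i j = ∑ j, I j i) (hwc : WeaklyConnected I)
    (a b : Fin n) : ReflTransGen (fun x y => 0 < I x y) a b :=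
  ReflTransGen.lift' id
    (fun _ _ hxy => hxy.elim (fun h => .single h) (reflTransGen_of_balanced h0 hbal))
    a b (hwc a b)

theorem exists_pos_le_of_pos {ι : Type*} [Finite ι] (f : ι → ℝ) :
    ∃ ε, 0 < ε ∧ ε ≤ 1 ∧ ∀ i, 0 < f i → ε ≤ f i := by
  have hf : ∀ i, ∀ᶠ ε in 𝓝[>] (0 : ℝ), 0 < f i → ε ≤ f i := fun i => by
    by_cases hi : 0 < f i
    · filter_upwards [Ioc_mem_nhdsGT hi] with ε hε using fun _ => hε.2
    · exact Eventually.of_forall fun _ h => absurd h hi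
  have hunit : ∀ᶠ ε in 𝓝[>] (0 : ℝ), ε ∈ Set.Ioc 0 1 := Ioc_mem_nhdsGT one_pos
  obtain ⟨ε, ⟨hε0, hε1⟩, hε⟩ := (hunit.and (eventually_all.2 hf)).exists
  exact ⟨ε, hε0, hε1, hε⟩

section Spread

variable {ι : Type*}

noncomputable def spread (x : ι → ℝ) : ℝ := (⨆ i, x i) - ⨅ i, x i

theorem iInf_le_apply [Finite ι] (x : ι → ℝ) (i : ι) : ⨅ j, x j ≤ x i :=
  ciInf_le (Finite.bddBelow_range x) i

theorem apply_le_iSup [Finite ι] (x : ι → ℝ) (i : ι) : x i ≤ ⨆ j, x j :=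
  le_ciSup (Finite.bddAbove_range x) i

theorem spread_nonneg [Finite ι] [Nonempty ι] (x : ι → ℝ) : 0 ≤ spread x :=
  sub_nonneg.2 ((iInf_le_apply x (Classical.arbitrary ι)).trans (apply_le_iSup x _))

theorem spread_le_sub [Nonempty ι] {x : ι → ℝ} {m M : ℝ} (hm : ∀ i, m ≤ x i)
    (hM : ∀ i, x i ≤ M) : spread x ≤ M - m :=
  sub_le_sub (ciSup_le hM) (le_ciInf hm)

end Spread

theorem abs_sub_mean_le_spread {n : ℕ} [NeZero n] (x : Fin n → ℝ) (i : Fin n) :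
    |x i - 1 / n * ∑ j, x j| ≤ spread x := by
  have hn : (0 : ℝ) < n := Nat.cast_pos.2 (NeZero.pos n)
  have hlow := card_nsmul_le_sum univ x _ fun j _ => iInf_le_apply x j
  have hupp := sum_le_card_nsmul univ x _ fun j _ => apply_le_iSup x j
  simp only [card_univ, Fintype.card_fin, nsmul_eq_mul] at hlow hupp
  refine abs_sub_le_of_le_of_le (iInf_le_apply x i) (apply_le_iSup x i) ?_ ?_
  · rw [one_div_mul_eq_div, le_div_iff₀ hn]; linarith
  · rw [one_div_mul_eq_div, div_le_iff₀ hn]; linarith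

theorem tendsto_zero_of_antitone_of_le_mul {D : ℕ → ℝ} (hanti : Antitone D)
    (h0 : ∀ t, 0 ≤ D t) {q : ℝ} (hq : q < 1) {K : ℕ} (hK : ∀ t, D (t + K) ≤ q * D t) :
    Tendsto D atTop (𝓝 0) := by
  have hL := tendsto_atTop_ciInf hanti ⟨0, by rintro _ ⟨t, rfl⟩; exact h0 t⟩
  have hL0 : 0 ≤ ⨅ t, D t := le_ciInf h0
  have hLq : ⨅ t, D t ≤ q * ⨅ t, D t :=
    le_of_tendsto_of_tendsto' ((tendsto_add_atTop_iff_nat K).2 hL) (hL.const_mul q) hK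
  rwa [show ⨅ t, D t = 0 by nlinarith] at hL

section Update

variable {n : ℕ} {I : Fin n → Fin n → ℝ}

noncomputable def consensusUpdate (I : Fin n → Fin n → ℝ) (x : Fin n → ℝ) : Fin n → ℝ :=
  fun i => x i + 1 / n * ∑ j, I j i * (x j - x i)

theorem sum_consensusUpdate (hbal : ∀ i, ∑ j, I i j = ∑ j, I j i) (x : Fin n → ℝ) :
    ∑ i, consensusUpdate I x i = ∑ i, x i := by
  have h : ∑ i, ∑ j, I j i * x j = ∑ i, ∑ j, I j i * x i := by
    rw [sum_comm]
    simp only [← sum_mul, hbal]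
  simp only [consensusUpdate, sum_add_distrib, ← mul_sum, mul_sub, sum_sub_distrib, h, sub_self,
    add_zero]

theorem consensusUpdate_neg (x : Fin n → ℝ) :
    consensusUpdate I (-x) = -consensusUpdate I x := by
  ext i
  simp only [consensusUpdate, Pi.neg_apply, neg_sub_neg, neg_add, ← mul_neg, ← sum_neg_distrib,
    neg_sub]

theorem consensusUpdate_sub_eq (x : Fin n → ℝ) (m : ℝ) (i : Fin n) :
    consensusUpdate I x i - m =
      1 / n * ∑ j, ((1 - I j i) * (x i - m) + I j i * (x j - m)) := by
  have hn : (n : ℝ) ≠ 0 := Nat.cast_ne_zero.2 i.pos.ne'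
  have h : ∑ j, ((1 - I j i) * (x i - m) + I j i * (x j - m)) =
      n * (x i - m) + ∑ j, I j i * (x j - x i) := by
    have hconst : ∑ _j : Fin n, (x i - m) = n * (x i - m) := by simp [mul_sub]
    rw [← hconst, ← sum_add_distrib]
    exact sum_congr rfl fun j _ => by ring
  rw [h, consensusUpdate]
  field_simp
  ring

variable (hI : ∀ i j, I i j ∈ Set.Icc (0 : ℝ) 1)
include hI

theorem mul_sub_le_consensusUpdate_sub {x : Fin n → ℝ} {m : ℝ} (hm : ∀ j, m ≤ x j) {ε : ℝ}
    (hε1 : ε ≤ 1) (hε : ∀ j i, 0 < I j i → ε ≤ I j i) {i j : Fin n}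
    (hji : j = i ∨ 0 < I j i) :
    ε / n * (x j - m) ≤ consensusUpdate I x i - m := by
  have hself : ∀ k, 0 ≤ (1 - I k i) * (x i - m) :=
    fun k => mul_nonneg (sub_nonneg.2 (hI k i).2) (sub_nonneg.2 (hm i))
  have hterm : ∀ k, 0 ≤ (1 - I k i) * (x i - m) + I k i * (x k - m) :=
    fun k => add_nonneg (hself k) (mul_nonneg (hI k i).1 (sub_nonneg.2 (hm k)))
  have hj : ε * (x j - m) ≤ (1 - I j i) * (x i - m) + I j i * (x j - m) := by
    rcases hji with rfl | hpos
    · calc ε * (x j - m) ≤ x j - m := mul_le_of_le_one_left (sub_nonneg.2 (hm j)) hε1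
        _ = _ := by ring
    · calc ε * (x j - m) ≤ I j i * (x j - m) :=
          mul_le_mul_of_nonneg_right (hε j i hpos) (sub_nonneg.2 (hm j))
        _ ≤ _ := le_add_of_nonneg_left (hself j)
  rw [consensusUpdate_sub_eq]
  calc ε / n * (x j - m) = 1 / n * (ε * (x j - m)) := by ring
    _ ≤ 1 / n * ((1 - I j i) * (x i - m) + I j i * (x j - m)) := by gcongr
    _ ≤ _ := by gcongr; exact single_le_sum (fun k _ => hterm k) (mem_univ j)

theorem le_consensusUpdate {x : Fin n → ℝ} {m : ℝ} (hm : ∀ j, m ≤ x j) (i : Fin n) :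
    m ≤ consensusUpdate I x i := by
  simpa using mul_sub_le_consensusUpdate_sub hI hm zero_le_one (fun _ _ h => h.le) (Or.inl rfl)

theorem consensusUpdate_le {x : Fin n → ℝ} {M : ℝ} (hM : ∀ j, x j ≤ M) (i : Fin n) :
    consensusUpdate I x i ≤ M := by
  have := le_consensusUpdate hI (x := -x) (fun j => neg_le_neg (hM j)) i
  rwa [consensusUpdate_neg, Pi.neg_apply, neg_le_neg_iff] at this

end Update

section Iterate

variable {n : ℕ} {I : Fin n → Fin n → ℝ}

theorem sum_iterate_consensusUpdate (hbal : ∀ i, ∑ j, I i j = ∑ j, I j i) (x : Fin n → ℝ)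
    (k : ℕ) : ∑ i, (consensusUpdate I)^[k] x i = ∑ i, x i := by
  induction k with
  | zero => rfl
  | succ k ih => rw [Function.iterate_succ_apply', sum_consensusUpdate hbal, ih]

variable (hI : ∀ i j, I i j ∈ Set.Icc (0 : ℝ) 1)
include hI

theorem le_iterate_consensusUpdate {x : Fin n → ℝ} {m : ℝ} (hm : ∀ j, m ≤ x j) (k : ℕ)
    (i : Fin n) : m ≤ (consensusUpdate I)^[k] x i :=
  Set.MapsTo.iterate (f := consensusUpdate I) (s := {y | ∀ j, m ≤ y j})
    (fun _ hy => le_consensusUpdate hI hy) k hm i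

theorem iterate_consensusUpdate_le {x : Fin n → ℝ} {M : ℝ} (hM : ∀ j, x j ≤ M) (k : ℕ)
    (i : Fin n) : (consensusUpdate I)^[k] x i ≤ M :=
  Set.MapsTo.iterate (f := consensusUpdate I) (s := {y | ∀ j, y j ≤ M})
    (fun _ hy => consensusUpdate_le hI hy) k hM i

theorem antitone_spread_iterate_consensusUpdate [NeZero n] (x : Fin n → ℝ) :
    Antitone fun t => spread ((consensusUpdate I)^[t] x) := by
  refine antitone_nat_of_succ_le fun t => ?_
  rw [Function.iterate_succ_apply']
  exact spread_le_sub (le_consensusUpdate hI (iInf_le_apply _))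
    (consensusUpdate_le hI (apply_le_iSup _))

variable {ε : ℝ} (hε0 : 0 ≤ ε) (hε1 : ε ≤ 1) (hε : ∀ j i, 0 < I j i → ε ≤ I j i)
include hε0 hε1 hε

theorem pow_succ_mul_sub_le_iterate_consensusUpdate_sub {k : ℕ} {a b b' : Fin n}
    (hk : ∀ x m, (∀ j, m ≤ x j) → (ε / n) ^ k * (x a - m) ≤ (consensusUpdate I)^[k] x b - m)
    (hbb' : b = b' ∨ 0 < I b b') (x : Fin n → ℝ) (m : ℝ) (hm : ∀ j, m ≤ x j) :
    (ε / n) ^ (k + 1) * (x a - m) ≤ (consensusUpdate I)^[k + 1] x b' - m := by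
  rw [Function.iterate_succ_apply']
  calc (ε / n) ^ (k + 1) * (x a - m) = ε / n * ((ε / n) ^ k * (x a - m)) := by ring
    _ ≤ ε / n * ((consensusUpdate I)^[k] x b - m) := by gcongr; exact hk x m hm
    _ ≤ _ := mul_sub_le_consensusUpdate_sub hI (le_iterate_consensusUpdate hI hm k) hε1 hε hbb'

theorem eventually_pow_mul_sub_le_iterate_consensusUpdate_sub {a b : Fin n}
    (hab : ReflTransGen (fun x y => 0 < I x y) a b) :
    ∀ᶠ k in atTop, ∀ x m, (∀ j, m ≤ x j) →
      (ε / n) ^ k * (x a - m) ≤ (consensusUpdate I)^[k] x b - m := by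
  obtain ⟨k, hk⟩ : ∃ k, ∀ x m, (∀ j, m ≤ x j) →
      (ε / n) ^ k * (x a - m) ≤ (consensusUpdate I)^[k] x b - m := by
    induction hab with
    | refl => exact ⟨0, fun x m _ => by simp⟩
    | tail _ hbc ih =>
      obtain ⟨k, hk⟩ := ih
      exact ⟨k + 1, pow_succ_mul_sub_le_iterate_consensusUpdate_sub hI hε0 hε1 hε hk (.inr hbc)⟩
  refine eventually_atTop.2 ⟨k, fun l hl => ?_⟩
  induction l, hl using Nat.le_induction with
  | base => exact hk
  | succ l _ ih =>
    exact pow_succ_mul_sub_le_iterate_consensusUpdate_sub hI hε0 hε1 hε ih (.inl rfl)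

end Iterate

theorem exists_spread_iterate_consensusUpdate_le {n : ℕ} [NeZero n] {I : Fin n → Fin n → ℝ}
    (hI : ∀ i j, I i j ∈ Set.Icc (0 : ℝ) 1) (hbal : ∀ i, ∑ j, I i j = ∑ j, I j i)
    (hwc : WeaklyConnected I) :
    ∃ q < 1, ∃ K, ∀ x, spread ((consensusUpdate I)^[K] x) ≤ q * spread x := by
  obtain ⟨ε, hε0, hε1, hε⟩ := exists_pos_le_of_pos (Function.uncurry I)
  have hreach := reflTransGen_of_weaklyConnected (fun i j => (hI i j).1) hbal hwc
  obtain ⟨K, hK⟩ := (eventually_all.2 fun a => eventually_all.2 fun b =>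
    eventually_pow_mul_sub_le_iterate_consensusUpdate_sub hI hε0.le hε1
      (fun j i => hε (j, i)) (hreach a b)).exists
  have hc : 0 < (ε / n) ^ K := pow_pos (div_pos hε0 (Nat.cast_pos.2 (NeZero.pos n))) K
  refine ⟨1 - (ε / n) ^ K, by linarith, K, fun x => ?_⟩
  obtain ⟨a, ha⟩ := exists_eq_ciSup_of_finite (f := x)
  have hlow : ∀ b, (⨅ j, x j) + (ε / n) ^ K * spread x ≤ (consensusUpdate I)^[K] x b :=
    fun b => by
      have := hK a b x _ (iInf_le_apply x)
      rw [ha] at this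
      unfold spread
      linarith
  have := spread_le_sub hlow (iterate_consensusUpdate_le hI (apply_le_iSup x) K)
  unfold spread at this ⊢
  linarith

theorem tendsto_iterate_consensusUpdate {n : ℕ} {I : Fin n → Fin n → ℝ}
    (hI : ∀ i j, I i j ∈ Set.Icc (0 : ℝ) 1) (hbal : ∀ i, ∑ j, I i j = ∑ j, I j i)
    (hwc : WeaklyConnected I) (x : Fin n → ℝ) (i : Fin n) :
    Tendsto (fun t => (consensusUpdate I)^[t] x i) atTop (𝓝 (1 / n * ∑ j, x j)) := by
  have : NeZero n := ⟨i.pos.ne'⟩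
  obtain ⟨q, hq, K, hK⟩ := exists_spread_iterate_consensusUpdate_le hI hbal hwc
  have hspread : Tendsto (fun t => spread ((consensusUpdate I)^[t] x)) atTop (𝓝 0) :=
    tendsto_zero_of_antitone_of_le_mul (antitone_spread_iterate_consensusUpdate hI x)
      (fun _ => spread_nonneg _) hq fun t => by
        rw [add_comm, Function.iterate_add_apply]; exact hK _
  refine tendsto_sub_nhds_zero_iff.1 (squeeze_zero_norm (fun t => ?_) hspread)
  rw [Real.norm_eq_abs, ← sum_iterate_consensusUpdate hbal x t]
  exact abs_sub_mean_le_spread _ i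

theorem balanced_weakly_connected_consensus_value_general (n : ℕ)
    (I : Fin n → Fin n → ℝ) (hI : ∀ i j, I i j ∈ Set.Icc (0:ℝ) 1)
    (hbal : ∀ i : Fin n, ∑ j, I i j = ∑ j, I j i)
    (hwc : WeaklyConnected I)
    (B : ℕ → Fin n → ℝ)
    (hupd : ∀ t i, B (t+1) i = B t i + (1 / n) * ∑ j, I j i * (B t j - B t i))
    (i : Fin n) :
    Filter.Tendsto (fun t => B t i) Filter.atTop
      (nhds ((1 / (n : ℝ)) * ∑ j, B 0 j)) := by
  have hB : ∀ t, B t = (consensusUpdate I)^[t] (B 0) := by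
    intro t
    induction t with
    | zero => rfl
    | succ t ih => rw [Function.iterate_succ_apply', ← ih]; exact funext (hupd t)
  simpa only [← hB] using tendsto_iterate_consensusUpdate hI hbal hwc (B 0) i

theorem balanced_weakly_connected_consensus_value (n : ℕ) (hn : 0 < n)
    (I : Fin n → Fin n → ℝ) (hI : ∀ i j, I i j ∈ Set.Icc (0:ℝ) 1)
    (hbal : ∀ i : Fin n, ∑ j, I i j = ∑ j, I j i)
    (hwc : WeaklyConnected I)
    (B : ℕ → Fin n → ℝ) (hB : ∀ t i, B t i ∈ Set.Icc (0:ℝ) 1)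
    (hupd : ∀ t i, B (t+1) i = B t i + (1 / n) * ∑ j, I j i * (B t j - B t i))
    (i : Fin n) :
    Filter.Tendsto (fun t => B t i) Filter.atTop
      (nhds ((1 / (n : ℝ)) * ∑ j, B 0 j)) :=
  balanced_weakly_connected_consensus_value_general n I hI hbal hwc B hupd i
end
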